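/- arXiv:2302.01197 — 5 statements merged into one kernel-verified Lean document; each statement's English description precedes it below -/
import Mathlib

section
/- Let $\alpha,\beta\in\mathbb{R}$ with $\alpha\geq 0$, $\alpha+\beta<1$, and let $u\in H^1_{\alpha,\beta,0}(0,1)$ (i.e., $u$ locally absolutely continuous, $\int_0^1 x^{\alpha+\beta}|u'|^2dx<\infty$, $u(0)=u(1)=0$). Then $\lim_{x\to 0^+} x^{\delta}|u(x)| = 0$ for every $\delta\geq (\alpha+\beta-1)/2$. -/
/-!
Write `σ = α + β`. Since `u(0+) = 0`, `u x = ∫ t in 0..x, u' t`, and the AM–GM inequality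
`2 |u'| ≤ λ t ^ (-σ) + λ⁻¹ t ^ σ u' ^ 2` gives, for every `λ > 0`,
`2 |u x| ≤ λ x ^ (1 - σ) / (1 - σ) + A x / λ` with `A x = ∫ t in 0..x, t ^ σ u' t ^ 2 → 0`.
Taking `λ` proportional to `x ^ ((σ - 1) / 2)` bounds `x ^ ((σ - 1) / 2) |u x|` by
`η + A x / ((1 - σ) η)` for any `η > 0`, so it tends to `0`; on `(0, 1)` a larger exponent
`δ` only makes `x ^ δ` smaller.
-/

open MeasureTheory Set Filter Topology

lemma two_mul_abs_le_div_add_mul_sq_div {b w l : ℝ} (hw : 0 < w) (hl : 0 < l) :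
    2 * |b| ≤ l / w + w * b ^ 2 / l := by
  have key : l / w + w * b ^ 2 / l - 2 * |b| = (l - w * |b|) ^ 2 / (l * w) := by
    field_simp
    ring_nf
    rw [sq_abs]
  have : 0 ≤ (l - w * |b|) ^ 2 / (l * w) := by positivity
  linarith

lemma abs_le_intervalIntegral_of_abs_deriv_le {u u' g : ℝ → ℝ} {a x : ℝ} (hax : a < x)
    (hderiv : ∀ t ∈ Ioc a x, HasDerivAt u (u' t) t) (hu : Tendsto u (𝓝[>] a) (𝓝 0))
    (hg : IntervalIntegrable g volume a x) (hle : ∀ t ∈ Ioc a x, |u' t| ≤ g t) :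
    |u x| ≤ ∫ t in a..x, g t := by
  classical
  -- `u a` is arbitrary, so the fundamental theorem is applied to `u` redefined as `0` at `a`.
  set v := Function.update u a 0
  have hvu : ∀ t ≠ a, v =ᶠ[𝓝 t] u := fun t ht =>
    (Function.update_eventuallyEq u a 0).filter_mono
      (le_principal_iff.2 (isOpen_compl_singleton.mem_nhds ht))
  have hv : ContinuousOn v (Icc a x) := by
    intro t ht
    rcases eq_or_ne t a with rfl | hta
    · exact continuousWithinAt_update_same.2 (hu.mono_left (nhdsWithin_mono _ fun s hs =>
        lt_of_le_of_ne hs.1.1 (Ne.symm hs.2)))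
    · exact ((hderiv t ⟨lt_of_le_of_ne ht.1 (Ne.symm hta), ht.2⟩).continuousAt.congr
        (hvu t hta).symm).continuousWithinAt
  have hu'int : IntervalIntegrable u' volume a x := by
    rw [intervalIntegrable_iff_integrableOn_Ioc_of_le hax.le] at hg ⊢
    refine hg.mono' ?_ ((ae_restrict_iff' measurableSet_Ioc).2 (ae_of_all _ hle))
    exact (measurable_deriv u).aestronglyMeasurable.congr
      ((ae_restrict_iff' measurableSet_Ioc).2 (ae_of_all _ fun t ht => (hderiv t ht).deriv))
  have hftc : ∫ t in a..x, u' t = u x := by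
    rw [intervalIntegral.integral_eq_sub_of_hasDerivAt_of_le hax.le hv
      (fun t ht => (hderiv t (Ioo_subset_Ioc_self ht)).congr_of_eventuallyEq (hvu t ht.1.ne'))
      hu'int]
    simp [v, hax.ne']
  rw [← hftc]
  exact intervalIntegral.norm_integral_le_of_norm_le (f := u') hax.le (ae_of_all _ hle) hg

lemma intervalIntegral_rpow_neg_of_lt_one {σ : ℝ} (hσ : σ < 1) (x : ℝ) :
    ∫ t in (0 : ℝ)..x, t ^ (-σ) = x ^ (1 - σ) / (1 - σ) := by
  rw [integral_rpow (Or.inl (by linarith)), Real.zero_rpow (by linarith), sub_zero,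
    neg_add_eq_sub]

lemma abs_le_of_weighted_deriv {σ x l : ℝ} {u u' : ℝ → ℝ} (hσ : σ < 1) (hx : 0 < x)
    (hl : 0 < l) (hderiv : ∀ t ∈ Ioc 0 x, HasDerivAt u (u' t) t)
    (hu0 : Tendsto u (𝓝[>] 0) (𝓝 0))
    (hint : IntervalIntegrable (fun t => t ^ σ * u' t ^ 2) volume 0 x) :
    |u x| ≤ (l * x ^ (1 - σ) / (1 - σ) + (∫ t in (0 : ℝ)..x, t ^ σ * u' t ^ 2) / l) / 2 := by
  have hrpow : IntervalIntegrable (fun t : ℝ => t ^ (-σ)) volume 0 x :=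
    intervalIntegral.intervalIntegrable_rpow' (by linarith)
  have hle : ∀ t ∈ Ioc 0 x, |u' t| ≤ (l * t ^ (-σ) + t ^ σ * u' t ^ 2 / l) / 2 := by
    intro t ht
    have := two_mul_abs_le_div_add_mul_sq_div (b := u' t) (Real.rpow_pos_of_pos ht.1 σ) hl
    rw [Real.rpow_neg ht.1.le, ← div_eq_mul_inv]
    linarith
  refine (abs_le_intervalIntegral_of_abs_deriv_le hx hderiv hu0
    (((hrpow.const_mul l).add (hint.div_const l)).div_const 2) hle).trans_eq ?_
  rw [intervalIntegral.integral_div, intervalIntegral.integral_add (hrpow.const_mul l)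
    (hint.div_const l), intervalIntegral.integral_const_mul, intervalIntegral.integral_div,
    intervalIntegral_rpow_neg_of_lt_one hσ, mul_div_assoc]

lemma tendsto_intervalIntegral_nhdsGT {f : ℝ → ℝ} {a b : ℝ} (hab : a < b)
    (hf : IntegrableOn f (Ioo a b)) :
    Tendsto (fun x => ∫ t in a..x, f t) (𝓝[>] a) (𝓝 0) := by
  have hf' : IntegrableOn f (uIcc a b) := by
    rwa [uIcc_of_le hab.le, integrableOn_Icc_iff_integrableOn_Ioo]
  have hcont := intervalIntegral.continuousOn_primitive_interval hf' a left_mem_uIcc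
  rw [ContinuousWithinAt, intervalIntegral.integral_same] at hcont
  exact hcont.mono_left (nhdsWithin_le_of_mem (mem_of_superset (Ioo_mem_nhdsGT hab)
    (Ioo_subset_Icc_self.trans Icc_subset_uIcc)))

theorem tendsto_rpow_mul_abs_of_weighted_deriv {σ b : ℝ} {u u' : ℝ → ℝ} (hσ : σ < 1)
    (hb : 0 < b) (hderiv : ∀ x ∈ Ioo 0 b, HasDerivAt u (u' x) x)
    (hint : IntegrableOn (fun x => x ^ σ * u' x ^ 2) (Ioo 0 b))
    (hu0 : Tendsto u (𝓝[>] 0) (𝓝 0)) :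
    Tendsto (fun x => x ^ ((σ - 1) / 2) * |u x|) (𝓝[>] 0) (𝓝 0) := by
  set A := fun x => ∫ t in (0 : ℝ)..x, t ^ σ * u' t ^ 2
  have hσ' : 0 < 1 - σ := by linarith
  refine tendsto_order.2 ⟨fun a ha => ?_, fun η hη => ?_⟩
  · filter_upwards [self_mem_nhdsWithin] with x (hx : 0 < x)
    exact ha.trans_le (by positivity)
  filter_upwards [Ioo_mem_nhdsGT hb, (tendsto_intervalIntegral_nhdsGT hb hint).eventually
    (gt_mem_nhds (show 0 < (1 - σ) * η ^ 2 by positivity))] with x hx hAx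
  set p := x ^ ((σ - 1) / 2)
  have hp : 0 < p := Real.rpow_pos_of_pos hx.1 _
  have hpx : p ^ 2 * x ^ (1 - σ) = 1 := by
    rw [← Real.rpow_natCast, ← Real.rpow_mul hx.1.le, ← Real.rpow_add hx.1]
    norm_num
  have hest := abs_le_of_weighted_deriv hσ hx.1 (l := (1 - σ) * η * p) (by positivity)
    (fun t ht => hderiv t ⟨ht.1, ht.2.trans_lt hx.2⟩) hu0
    ((intervalIntegrable_iff_integrableOn_Ioo_of_le hx.1.le).2
      (hint.mono_set (Ioo_subset_Ioo_right hx.2.le)))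
  calc p * |u x|
      ≤ p * (((1 - σ) * η * p) * x ^ (1 - σ) / (1 - σ) + A x / ((1 - σ) * η * p)) / 2 := by
        rw [mul_div_assoc]; gcongr
    _ = (η + A x / ((1 - σ) * η)) / 2 := by
        field_simp
        linear_combination (1 - σ) * η ^ 2 * hpx
    _ < η := by
        have : A x / ((1 - σ) * η) < η := by
          rw [div_lt_iff₀ (by positivity)]
          linarith
        linarith

theorem stmt3_general (α β : ℝ) (hαβ : α + β < 1) (u u' : ℝ → ℝ)
    (hderiv : ∀ x ∈ Ioo (0:ℝ) 1, HasDerivAt u (u' x) x)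
    (hint : IntegrableOn (fun x => x ^ (α + β) * u' x ^ 2) (Ioo 0 1))
    (hu0 : Tendsto u (𝓝[>] (0:ℝ)) (𝓝 0)) :
    ∀ δ : ℝ, (α + β - 1)/2 ≤ δ →
      Tendsto (fun x => x ^ δ * |u x|) (𝓝[>] (0:ℝ)) (𝓝 0) := by
  intro δ hδ
  refine squeeze_zero' ?_ ?_
    (tendsto_rpow_mul_abs_of_weighted_deriv hαβ one_pos hderiv hint hu0)
  · filter_upwards [self_mem_nhdsWithin] with x (hx : 0 < x)
    positivity
  · filter_upwards [Ioo_mem_nhdsGT one_pos] with x hx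
    exact mul_le_mul_of_nonneg_right (Real.rpow_le_rpow_of_exponent_ge hx.1 hx.2.le hδ)
      (abs_nonneg _)

theorem stmt3 (α β : ℝ) (hα : 0 ≤ α) (hαβ : α + β < 1) (u u' : ℝ → ℝ)
    (hderiv : ∀ x ∈ Ioo (0:ℝ) 1, HasDerivAt u (u' x) x)
    (hu : IntegrableOn (fun x => u x ^ 2 * x ^ β) (Ioo 0 1))
    (hint : IntegrableOn (fun x => x ^ (α + β) * u' x ^ 2) (Ioo 0 1))
    (hu0 : Tendsto u (𝓝[>] (0:ℝ)) (𝓝 0))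
    (hu1 : Tendsto u (𝓝[<] (1:ℝ)) (𝓝 0)) :
    ∀ δ : ℝ, (α + β - 1)/2 ≤ δ →
      Tendsto (fun x => x ^ δ * |u x|) (𝓝[>] (0:ℝ)) (𝓝 0) :=
  stmt3_general α β hαβ u u' hderiv hint hu0
end

section
/- Generalized Hardy inequality: Let $\alpha,\beta\in\mathbb{R}$ with $\alpha\geq 0$, $\alpha+\beta<1$, set $\delta=\alpha+\beta$. Then for every $u\in H^1_{\alpha,\beta,0}(0,1)$, $$\frac{(1-\delta)^2}{4}\int_0^1 \frac{u^2}{x^{2-\delta}}dx \leq \int_0^1 x^{\delta}|u'|^2 dx.$$ -/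
/-!
Put `c = (1 - δ) / 2`, so that `δ - 1 = -2c`. Completing the square gives
`x ^ δ * u' ^ 2 - c ^ 2 * u ^ 2 / x ^ (2 - δ) - (c * u ^ 2 * x ^ (δ - 1))' = x ^ δ * (u' - c * u / x) ^ 2`,
so integrating over `[s, t] ⊂ (0, b)` bounds the left-hand side by the weighted energy plus the
boundary term `c * u s ^ 2 * s ^ (δ - 1)`; the boundary term at `t` has a favourable sign.
Since `u s = ∫₀ˢ u'`, Cauchy–Schwarz against the weight `x ^ δ` gives
`u s ^ 2 ≤ s ^ (1 - δ) / (1 - δ) * ∫₀ˢ x ^ δ * u' ^ 2`, so the boundary term at `s` tends to `0`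
as `s → 0⁺`, and monotone convergence finishes the proof.
-/

open MeasureTheory Set Filter Topology

lemma two_mul_mul_abs_le_sq_mul_inv_add_mul_sq {w : ℝ} (hw : 0 < w) (l v : ℝ) :
    2 * l * |v| ≤ l ^ 2 * w⁻¹ + w * v ^ 2 := by
  have hsq : l ^ 2 * w⁻¹ + w * v ^ 2 - 2 * l * |v| = (l - w * |v|) ^ 2 * w⁻¹ := by
    field_simp
    rw [← sq_abs v]
    ring
  have : 0 ≤ (l - w * |v|) ^ 2 * w⁻¹ := by positivity
  linarith

lemma sq_le_mul_of_forall_two_mul_mul_abs_le {y A K : ℝ} (hA : 0 < A)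
    (h : ∀ l, 0 ≤ l → 2 * l * |y| ≤ l ^ 2 * A + K) : y ^ 2 ≤ A * K := by
  have hy := h (|y| / A) (by positivity)
  have hsq : (|y| / A) ^ 2 * A = |y| ^ 2 / A := by field_simp
  rw [hsq, mul_assoc, div_mul_eq_mul_div, ← sq] at hy
  rw [← sq_abs, ← div_le_iff₀' hA]
  linarith

lemma integrableOn_Ioo_of_integrableOn_rpow_mul_sq {δ b : ℝ} (hδ : δ < 1) {f : ℝ → ℝ}
    (hf : AEStronglyMeasurable f (volume.restrict (Ioo 0 b)))
    (hint : IntegrableOn (fun x => x ^ δ * f x ^ 2) (Ioo 0 b)) : IntegrableOn f (Ioo 0 b) := by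
  have hrpow : IntegrableOn (fun x : ℝ => x ^ (-δ)) (Ioo 0 b) :=
    ((intervalIntegral.intervalIntegrable_rpow' (by linarith)).def'.mono_set
      (Ioo_subset_Ioc_self.trans Ioc_subset_uIoc))
  refine Integrable.mono' ((hrpow.add hint).div_const 2) hf ?_
  filter_upwards [ae_restrict_mem measurableSet_Ioo] with x hx
  have := two_mul_mul_abs_le_sq_mul_inv_add_mul_sq (Real.rpow_pos_of_pos hx.1 δ) 1 (f x)
  rw [Pi.add_apply, Real.rpow_neg hx.1.le, Real.norm_eq_abs]
  linarith

lemma setIntegral_Ioo_le_of_setIntegral_Icc_le {f g : ℝ → ℝ} {a b B : ℝ} (hab : a < b)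
    (hB : 0 ≤ B) (hf : ContinuousOn f (Ioo a b)) (hf0 : ∀ x ∈ Ioo a b, 0 ≤ f x)
    (hg : Tendsto g (𝓝[>] a) (𝓝 0))
    (hle : ∀ s t, a < s → s ≤ t → t < b → ∫ x in Icc s t, f x ≤ B + g s) :
    ∫ x in Ioo a b, f x ≤ B := by
  have hcover : AECover (volume.restrict (Ioo a b)) (𝓝[>] a ×ˢ 𝓝[<] b) fun p => Icc p.1 p.2 :=
    aecover_Ioo_of_Icc (tendsto_fst.mono_right nhdsWithin_le_nhds)
      (tendsto_snd.mono_right nhdsWithin_le_nhds)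
  have hmeas := hf.aestronglyMeasurable (μ := volume) measurableSet_Ioo
  have hbound : Tendsto (fun p : ℝ × ℝ => ENNReal.ofReal (B + g p.1)) (𝓝[>] a ×ˢ 𝓝[<] b)
      (𝓝 (ENNReal.ofReal B)) := by
    simpa using ENNReal.tendsto_ofReal ((hg.comp tendsto_fst).const_add B)
  have hlint : ∫⁻ x in Ioo a b, ENNReal.ofReal (f x) ≤ ENNReal.ofReal B := by
    refine le_of_tendsto_of_tendsto
      (hcover.lintegral_tendsto_of_countably_generated hmeas.aemeasurable.ennreal_ofReal)
      hbound ?_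
    have hmid : a < (a + b) / 2 ∧ (a + b) / 2 < b := ⟨by linarith, by linarith⟩
    filter_upwards [Eventually.prod_mk (Ioo_mem_nhdsGT hmid.1) (Ioo_mem_nhdsLT hmid.2)]
    rintro ⟨s, t⟩ ⟨hs, ht⟩
    have hsub : Icc s t ⊆ Ioo a b := Icc_subset_Ioo hs.1 ht.2
    rw [Measure.restrict_restrict_of_subset hsub, ← ofReal_integral_eq_lintegral_ofReal
      ((hf.mono hsub).integrableOn_Icc) (ae_restrict_of_forall_mem measurableSet_Icc
        fun x hx => hf0 x (hsub hx))]
    exact ENNReal.ofReal_le_ofReal (hle s t hs.1 (by linarith [hs.2, ht.1]) ht.2)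
  rw [integral_eq_lintegral_of_nonneg_ae (ae_restrict_of_forall_mem measurableSet_Ioo hf0) hmeas]
  exact ENNReal.toReal_le_of_le_ofReal hB hlint

section Hardy

variable {δ b : ℝ} {u u' : ℝ → ℝ}

lemma aestronglyMeasurable_of_hasDerivAt {s : Set ℝ} (hs : MeasurableSet s)
    (hderiv : ∀ x ∈ s, HasDerivAt u (u' x) x) : AEStronglyMeasurable u' (volume.restrict s) :=
  (measurable_deriv u).aestronglyMeasurable.congr <| by
    filter_upwards [ae_restrict_mem hs] with x hx
    exact (hderiv x hx).deriv

lemma sq_le_rpow_mul_intervalIntegral (hδ : δ < 1) {a : ℝ} (ha : a ∈ Ioo 0 b)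
    (hderiv : ∀ x ∈ Ioo 0 b, HasDerivAt u (u' x) x)
    (hint : IntegrableOn (fun x => x ^ δ * u' x ^ 2) (Ioo 0 b))
    (hu0 : Tendsto u (𝓝[>] 0) (𝓝 0)) :
    u a ^ 2 ≤ a ^ (1 - δ) / (1 - δ) * ∫ x in 0..a, x ^ δ * u' x ^ 2 := by
  have hsub : Ioc 0 a ⊆ Ioo 0 b := fun x hx => ⟨hx.1, hx.2.trans_lt ha.2⟩
  have hu' : IntervalIntegrable u' volume 0 a :=
    (intervalIntegrable_iff_integrableOn_Ioc_of_le ha.1.le).2 <|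
      (integrableOn_Ioo_of_integrableOn_rpow_mul_sq hδ
        (aestronglyMeasurable_of_hasDerivAt measurableSet_Ioo hderiv) hint).mono_set hsub
  have hK : IntervalIntegrable (fun x => x ^ δ * u' x ^ 2) volume 0 a :=
    (intervalIntegrable_iff_integrableOn_Ioc_of_le ha.1.le).2 (hint.mono_set hsub)
  have hrpow : IntervalIntegrable (fun x : ℝ => x ^ (-δ)) volume 0 a :=
    intervalIntegral.intervalIntegrable_rpow' (by linarith)
  have hFTC : u a = ∫ x in 0..a, u' x := by
    rw [intervalIntegral.integral_eq_sub_of_hasDerivAt_of_tendsto ha.1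
      (fun x hx => hderiv x ⟨hx.1, hx.2.trans ha.2⟩) hu' hu0
      ((hderiv a ha).continuousAt.tendsto.mono_left nhdsWithin_le_nhds), sub_zero]
  -- Cauchy–Schwarz, as AM–GM with a free parameter `l` that is optimised afterwards
  refine sq_le_mul_of_forall_two_mul_mul_abs_le (by have := ha.1; positivity) fun l hl => ?_
  calc 2 * l * |u a| ≤ ∫ x in 0..a, 2 * l * |u' x| := by
        rw [hFTC, intervalIntegral.integral_const_mul]
        gcongr
        exact intervalIntegral.abs_integral_le_integral_abs ha.1.le
    _ ≤ ∫ x in 0..a, (l ^ 2 * x ^ (-δ) + x ^ δ * u' x ^ 2) := by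
        refine intervalIntegral.integral_mono_on_of_le_Ioo ha.1.le (hu'.abs.const_mul _)
          ((hrpow.const_mul _).add hK) fun x hx => ?_
        rw [Real.rpow_neg hx.1.le]
        exact two_mul_mul_abs_le_sq_mul_inv_add_mul_sq (Real.rpow_pos_of_pos hx.1 δ) l (u' x)
    _ = l ^ 2 * (a ^ (1 - δ) / (1 - δ)) + ∫ x in 0..a, x ^ δ * u' x ^ 2 := by
        rw [intervalIntegral.integral_add (hrpow.const_mul _) hK,
          intervalIntegral.integral_const_mul, integral_rpow (Or.inl (by linarith)),
          Real.zero_rpow (by linarith), neg_add_eq_sub]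
        ring
    _ = _ := by ring

noncomputable def hardyBoundaryTerm (δ : ℝ) (u : ℝ → ℝ) (x : ℝ) : ℝ :=
  (1 - δ) / 2 * (u x ^ 2 * x ^ (δ - 1))

lemma tendsto_hardyBoundaryTerm_nhdsGT_zero (hδ : δ < 1) (hb : 0 < b)
    (hderiv : ∀ x ∈ Ioo 0 b, HasDerivAt u (u' x) x)
    (hint : IntegrableOn (fun x => x ^ δ * u' x ^ 2) (Ioo 0 b))
    (hu0 : Tendsto u (𝓝[>] 0) (𝓝 0)) :
    Tendsto (hardyBoundaryTerm δ u) (𝓝[>] 0) (𝓝 0) := by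
  have hK : Tendsto (fun a => ∫ x in 0..a, x ^ δ * u' x ^ 2) (𝓝[>] 0) (𝓝 0) := by
    have hcont := intervalIntegral.continuousOn_primitive_interval (μ := volume)
      (f := fun x => x ^ δ * u' x ^ 2) (a := 0) (b := b)
      (by rwa [uIcc_of_le hb.le, integrableOn_Icc_iff_integrableOn_Ioo]) 0 left_mem_uIcc
    have hle : 𝓝[>] (0 : ℝ) ≤ 𝓝[uIcc 0 b] 0 := by
      rw [uIcc_of_le hb.le, ← nhdsWithin_Ioo_eq_nhdsGT hb]
      exact nhdsWithin_mono _ Ioo_subset_Icc_self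
    simpa using hcont.tendsto.mono_left hle
  have hsq : Tendsto (fun a => u a ^ 2 * a ^ (δ - 1)) (𝓝[>] 0) (𝓝 0) := by
    refine squeeze_zero' ?_ ?_ (by simpa using hK.div_const (1 - δ))
    · filter_upwards [self_mem_nhdsWithin] with a ha
      exact mul_nonneg (sq_nonneg _) (Real.rpow_nonneg (le_of_lt ha) _)
    · filter_upwards [Ioo_mem_nhdsGT hb] with a ha
      have hcancel : a ^ (1 - δ) * a ^ (δ - 1) = 1 := by
        rw [← Real.rpow_add ha.1]; simp
      calc u a ^ 2 * a ^ (δ - 1)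
          ≤ a ^ (1 - δ) / (1 - δ) * (∫ x in 0..a, x ^ δ * u' x ^ 2) * a ^ (δ - 1) :=
            mul_le_mul_of_nonneg_right (sq_le_rpow_mul_intervalIntegral hδ ha hderiv hint hu0)
              (Real.rpow_nonneg ha.1.le _)
        _ = a ^ (1 - δ) * a ^ (δ - 1) * (∫ x in 0..a, x ^ δ * u' x ^ 2) / (1 - δ) := by ring
        _ = (∫ x in 0..a, x ^ δ * u' x ^ 2) / (1 - δ) := by rw [hcancel, one_mul]
  have := hsq.const_mul ((1 - δ) / 2)
  rwa [mul_zero] at this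

lemma hasDerivAt_hardyBoundaryTerm {x : ℝ} (hx : x ≠ 0) (hu : HasDerivAt u (u' x) x) :
    HasDerivAt (hardyBoundaryTerm δ u)
      ((1 - δ) / 2 * (2 * u x * u' x * x ^ (δ - 1) + u x ^ 2 * ((δ - 1) * x ^ (δ - 1 - 1)))) x := by
  refine (((hu.pow 2).mul (Real.hasDerivAt_rpow_const (p := δ - 1) (Or.inl hx))).const_mul
    ((1 - δ) / 2)).congr_deriv ?_
  simp only [Pi.pow_apply]
  push_cast
  ring

lemma hardyBoundaryTerm_deriv_le {x : ℝ} (hx : 0 < x) (y v : ℝ) :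
    (1 - δ) / 2 * (2 * y * v * x ^ (δ - 1) + y ^ 2 * ((δ - 1) * x ^ (δ - 1 - 1))) ≤
      x ^ δ * v ^ 2 - (1 - δ) ^ 2 / 4 * (y ^ 2 / x ^ (2 - δ)) := by
  rw [Real.rpow_sub_one hx.ne' (δ - 1), Real.rpow_sub_one hx.ne' δ, Real.rpow_sub hx 2 δ,
    Real.rpow_two]
  have hgap : x ^ δ * v ^ 2 - (1 - δ) ^ 2 / 4 * (y ^ 2 / (x ^ 2 / x ^ δ)) -
      (1 - δ) / 2 * (2 * y * v * (x ^ δ / x) + y ^ 2 * ((δ - 1) * (x ^ δ / x / x))) =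
      x ^ δ * (v - (1 - δ) / 2 * y / x) ^ 2 := by
    field_simp
    ring
  linarith [mul_nonneg (Real.rpow_pos_of_pos hx δ).le (sq_nonneg (v - (1 - δ) / 2 * y / x))]

lemma continuousOn_sq_div_rpow {s : Set ℝ} (hs : s ⊆ Ioi 0) (hu : ContinuousOn u s) :
    ContinuousOn (fun x => u x ^ 2 / x ^ (2 - δ)) s :=
  (hu.pow 2).div (continuousOn_id.rpow_const fun _ hx => Or.inl (hs hx).ne')
    fun _ hx => (Real.rpow_pos_of_pos (hs hx) _).ne'

lemma hardy_inequality_Icc {s t : ℝ} (hs : 0 < s) (hst : s ≤ t)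
    (hderiv : ∀ x ∈ Icc s t, HasDerivAt u (u' x) x)
    (hint : IntegrableOn (fun x => x ^ δ * u' x ^ 2) (Icc s t)) :
    ∫ x in Icc s t, (1 - δ) ^ 2 / 4 * (u x ^ 2 / x ^ (2 - δ)) ≤
      (∫ x in Icc s t, x ^ δ * u' x ^ 2) + hardyBoundaryTerm δ u s - hardyBoundaryTerm δ u t := by
  have hpos : Icc s t ⊆ Ioi 0 := fun x hx => hs.trans_le hx.1
  have hweight : IntegrableOn (fun x => (1 - δ) ^ 2 / 4 * (u x ^ 2 / x ^ (2 - δ))) (Icc s t) :=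
    (continuousOn_const.mul (continuousOn_sq_div_rpow hpos fun x hx =>
      (hderiv x hx).continuousAt.continuousWithinAt)).integrableOn_Icc
  have hFTC := intervalIntegral.sub_le_integral_of_hasDeriv_right_of_le
    (φ := fun x => x ^ δ * u' x ^ 2 - (1 - δ) ^ 2 / 4 * (u x ^ 2 / x ^ (2 - δ))) hst
    (fun x hx => (hasDerivAt_hardyBoundaryTerm (hpos hx).ne' (hderiv x hx)).continuousAt
      |>.continuousWithinAt)
    (fun x hx => (hasDerivAt_hardyBoundaryTerm (hpos (Ioo_subset_Icc_self hx)).ne'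
      (hderiv x (Ioo_subset_Icc_self hx))).hasDerivWithinAt)
    (hint.sub hweight) fun x hx => hardyBoundaryTerm_deriv_le (hpos (Ioo_subset_Icc_self hx)) _ _
  rw [intervalIntegral.integral_of_le hst, ← integral_Icc_eq_integral_Ioc,
    integral_sub hint hweight] at hFTC
  linarith

theorem hardy_inequality (hδ : δ < 1) (hb : 0 < b)
    (hderiv : ∀ x ∈ Ioo 0 b, HasDerivAt u (u' x) x)
    (hint : IntegrableOn (fun x => x ^ δ * u' x ^ 2) (Ioo 0 b))
    (hu0 : Tendsto u (𝓝[>] 0) (𝓝 0)) :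
    (1 - δ) ^ 2 / 4 * ∫ x in Ioo 0 b, u x ^ 2 / x ^ (2 - δ) ≤
      ∫ x in Ioo 0 b, x ^ δ * u' x ^ 2 := by
  have hpos : Ioo 0 b ⊆ Ioi 0 := Ioo_subset_Ioi_self
  rw [← integral_const_mul]
  refine setIntegral_Ioo_le_of_setIntegral_Icc_le hb
    (setIntegral_nonneg measurableSet_Ioo fun x hx => by have := hx.1; positivity)
    (continuousOn_const.mul (continuousOn_sq_div_rpow hpos fun x hx =>
      (hderiv x hx).continuousAt.continuousWithinAt))
    (fun x hx => by have := hx.1; positivity)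
    (tendsto_hardyBoundaryTerm_nhdsGT_zero hδ hb hderiv hint hu0) fun s t hs hst ht => ?_
  have hsub : Icc s t ⊆ Ioo 0 b := Icc_subset_Ioo hs ht
  have hJ : ∫ x in Icc s t, x ^ δ * u' x ^ 2 ≤ ∫ x in Ioo 0 b, x ^ δ * u' x ^ 2 :=
    setIntegral_mono_set hint (ae_restrict_of_forall_mem measurableSet_Ioo fun x hx => by
      have := hx.1; positivity) hsub.eventuallyLE
  have hGt : 0 ≤ hardyBoundaryTerm δ u t := by
    have ht0 : 0 < t := hs.trans_le hst
    have hδ' : 0 < 1 - δ := by linarith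
    unfold hardyBoundaryTerm
    positivity
  linarith [hardy_inequality_Icc hs hst (fun x hx => hderiv x (hsub hx)) (hint.mono_set hsub)]

end Hardy

theorem stmt4_general (α β : ℝ) (hαβ : α + β < 1) (u u' : ℝ → ℝ)
    (hderiv : ∀ x ∈ Ioo (0:ℝ) 1, HasDerivAt u (u' x) x)
    (hint : IntegrableOn (fun x => x ^ (α + β) * u' x ^ 2) (Ioo 0 1))
    (hu0 : Tendsto u (𝓝[>] (0:ℝ)) (𝓝 0)) :
    (1 - (α + β))^2 / 4 * ∫ x in Ioo (0:ℝ) 1, u x ^ 2 / x ^ (2 - (α + β)) ≤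
      ∫ x in Ioo (0:ℝ) 1, x ^ (α + β) * u' x ^ 2 :=
  hardy_inequality hαβ one_pos hderiv hint hu0

theorem stmt4 (α β : ℝ) (hα : 0 ≤ α) (hαβ : α + β < 1) (u u' : ℝ → ℝ)
    (hderiv : ∀ x ∈ Ioo (0:ℝ) 1, HasDerivAt u (u' x) x)
    (hu : IntegrableOn (fun x => u x ^ 2 * x ^ β) (Ioo 0 1))
    (hint : IntegrableOn (fun x => x ^ (α + β) * u' x ^ 2) (Ioo 0 1))
    (hu0 : Tendsto u (𝓝[>] (0:ℝ)) (𝓝 0))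
    (hu1 : Tendsto u (𝓝[<] (1:ℝ)) (𝓝 0)) :
    (1 - (α + β))^2 / 4 * ∫ x in Ioo (0:ℝ) 1, u x ^ 2 / x ^ (2 - (α + β)) ≤
      ∫ x in Ioo (0:ℝ) 1, x ^ (α + β) * u' x ^ 2 :=
  stmt4_general α β hαβ u u' hderiv hint hu0
end

section
/- Weighted Poincaré inequality: Let $0\leq\alpha<2$, $\alpha+\beta<1$. Then for every $u\in H^1_{\alpha,\beta,0}(0,1)$, $$\int_0^1 |u|^2 x^{\beta}dx \leq \frac{1}{(2-\alpha)(1-\alpha-\beta)}\int_0^1 x^{\alpha+\beta}|u'|^2dx.$$ -/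
open MeasureTheory Set Filter Topology

/-!
With `c = α + β`, write `u x = ∫₀ˣ u'` and apply Cauchy–Schwarz to `u' = t^(-c/2) · t^(c/2) u'`:
this gives the Hardy-type bound `u(x)² ≤ x^(1-c) / (1-c) · ∫₀¹ t^c u'²`.
Multiplying by `x^β` and integrating `x^(1-α)` over `(0,1)` produces the factor `1 / (2-α)`.
-/

section WeightedCauchySchwarz

variable {X : Type*} [MeasurableSpace X] {μ : Measure X} {w f : X → ℝ}

lemma memLp_two_sqrt_inv (hw : 0 ≤ᵐ[μ] w) (hw_inv : Integrable (fun a ↦ (w a)⁻¹) μ) :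
    MemLp (fun a ↦ √(w a)⁻¹) 2 μ := by
  rw [memLp_two_iff_integrable_sq (Real.continuous_sqrt.comp_aestronglyMeasurable hw_inv.1)]
  refine hw_inv.congr ?_
  filter_upwards [hw] with a ha
  rw [Real.sq_sqrt (inv_nonneg.2 ha)]

lemma memLp_two_sqrt_mul (hw : 0 ≤ᵐ[μ] w) (hw_meas : AEStronglyMeasurable w μ)
    (hf_meas : AEStronglyMeasurable f μ) (hwf : Integrable (fun a ↦ w a * f a ^ 2) μ) :
    MemLp (fun a ↦ √(w a) * f a) 2 μ := by
  have h_meas : AEStronglyMeasurable (fun a ↦ √(w a) * f a) μ :=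
    (Real.continuous_sqrt.comp_aestronglyMeasurable hw_meas).mul hf_meas
  rw [memLp_two_iff_integrable_sq h_meas]
  refine hwf.congr ?_
  filter_upwards [hw] with a ha
  rw [mul_pow, Real.sq_sqrt ha]

lemma sqrt_inv_mul_sqrt_mul {a b : ℝ} (ha : 0 < a) : √a⁻¹ * (√a * b) = b := by
  rw [Real.sqrt_inv, inv_mul_cancel_left₀ (Real.sqrt_pos.2 ha).ne']

lemma integrable_of_integrable_inv_of_integrable_mul_sq (hw : ∀ᵐ a ∂μ, 0 < w a)
    (hw_meas : AEStronglyMeasurable w μ) (hf_meas : AEStronglyMeasurable f μ)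
    (hw_inv : Integrable (fun a ↦ (w a)⁻¹) μ) (hwf : Integrable (fun a ↦ w a * f a ^ 2) μ) :
    Integrable f μ := by
  have hw' : 0 ≤ᵐ[μ] w := hw.mono fun a ha ↦ ha.le
  refine ((memLp_two_sqrt_inv hw' hw_inv).integrable_mul
    (memLp_two_sqrt_mul hw' hw_meas hf_meas hwf)).congr ?_
  filter_upwards [hw] with a ha
  exact sqrt_inv_mul_sqrt_mul ha

theorem sq_integral_le_integral_inv_mul_integral_mul_sq (hw : ∀ᵐ a ∂μ, 0 < w a)
    (hw_meas : AEStronglyMeasurable w μ) (hf_meas : AEStronglyMeasurable f μ)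
    (hw_inv : Integrable (fun a ↦ (w a)⁻¹) μ) (hwf : Integrable (fun a ↦ w a * f a ^ 2) μ) :
    (∫ a, f a ∂μ) ^ 2 ≤ (∫ a, (w a)⁻¹ ∂μ) * ∫ a, w a * f a ^ 2 ∂μ := by
  have hw' : 0 ≤ᵐ[μ] w := hw.mono fun a ha ↦ ha.le
  have h_sqrt_mul_abs : MemLp (fun a ↦ √(w a) * |f a|) 2 μ :=
    memLp_two_sqrt_mul hw' hw_meas (continuous_abs.comp_aestronglyMeasurable hf_meas)
      (by simpa using hwf)
  have holder := integral_mul_le_Lp_mul_Lq_of_nonneg (μ := μ) Real.HolderConjugate.two_two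
    (f := fun a ↦ √(w a)⁻¹) (g := fun a ↦ √(w a) * |f a|)
    (Eventually.of_forall fun _ ↦ Real.sqrt_nonneg _)
    (Eventually.of_forall fun _ ↦ mul_nonneg (Real.sqrt_nonneg _) (abs_nonneg _))
    (by simpa using memLp_two_sqrt_inv hw' hw_inv)
    (by simpa using h_sqrt_mul_abs)
  have h_abs : ∫ a, √(w a)⁻¹ * (√(w a) * |f a|) ∂μ = ∫ a, |f a| ∂μ := by
    refine integral_congr_ae ?_
    filter_upwards [hw] with a ha
    exact sqrt_inv_mul_sqrt_mul ha
  have h_inv : ∫ a, √(w a)⁻¹ ^ (2 : ℝ) ∂μ = ∫ a, (w a)⁻¹ ∂μ := by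
    refine integral_congr_ae ?_
    filter_upwards [hw] with a ha
    rw [Real.rpow_two, Real.sq_sqrt (inv_nonneg.2 ha.le)]
  have h_wf : ∫ a, (√(w a) * |f a|) ^ (2 : ℝ) ∂μ = ∫ a, w a * f a ^ 2 ∂μ := by
    refine integral_congr_ae ?_
    filter_upwards [hw] with a ha
    rw [Real.rpow_two, mul_pow, Real.sq_sqrt ha.le, sq_abs]
  have h_inv_nonneg : 0 ≤ ∫ a, (w a)⁻¹ ∂μ :=
    integral_nonneg_of_ae (hw.mono fun a ha ↦ (inv_pos.2 ha).le)
  have h_wf_nonneg : 0 ≤ ∫ a, w a * f a ^ 2 ∂μ :=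
    integral_nonneg_of_ae (hw.mono fun a ha ↦ mul_nonneg ha.le (sq_nonneg _))
  rw [h_abs, h_inv, h_wf, ← Real.sqrt_eq_rpow, ← Real.sqrt_eq_rpow,
    ← Real.sqrt_mul h_inv_nonneg] at holder
  calc (∫ a, f a ∂μ) ^ 2 ≤ (∫ a, |f a| ∂μ) ^ 2 :=
        sq_le_sq.2 (abs_integral_le_integral_abs.trans (le_abs_self _))
    _ ≤ _ := (Real.le_sqrt (integral_nonneg fun _ ↦ abs_nonneg _)
        (mul_nonneg h_inv_nonneg h_wf_nonneg)).1 holder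

end WeightedCauchySchwarz

theorem sq_sub_le_intervalIntegral_inv_mul_intervalIntegral_mul_sq {a b : ℝ} (hab : a ≤ b)
    {w u u' : ℝ → ℝ} (hw_cont : ContinuousOn w (Icc a b)) (hw_pos : ∀ t ∈ Icc a b, 0 < w t)
    (hderiv : ∀ t ∈ Icc a b, HasDerivAt u (u' t) t)
    (hint : IntegrableOn (fun t ↦ w t * u' t ^ 2) (Ioc a b)) :
    (u b - u a) ^ 2 ≤ (∫ t in a..b, (w t)⁻¹) * ∫ t in a..b, w t * u' t ^ 2 := by
  have hw : ∀ᵐ t ∂volume.restrict (Ioc a b), 0 < w t :=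
    ae_restrict_of_forall_mem measurableSet_Ioc fun t ht ↦ hw_pos t (Ioc_subset_Icc_self ht)
  have hw_meas : AEStronglyMeasurable w (volume.restrict (Ioc a b)) :=
    (hw_cont.mono Ioc_subset_Icc_self).aestronglyMeasurable measurableSet_Ioc
  have hu'_meas : AEStronglyMeasurable u' (volume.restrict (Ioc a b)) := by
    refine (measurable_deriv u).aestronglyMeasurable.congr ?_
    filter_upwards [ae_restrict_mem measurableSet_Ioc] with t ht
    exact (hderiv t (Ioc_subset_Icc_self ht)).deriv
  have hw_inv : IntegrableOn (fun t ↦ (w t)⁻¹) (Ioc a b) :=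
    ((hw_cont.inv₀ fun t ht ↦ (hw_pos t ht).ne').integrableOn_Icc).mono_set Ioc_subset_Icc_self
  have hu'_int : IntervalIntegrable u' volume a b :=
    (intervalIntegrable_iff_integrableOn_Ioc_of_le hab).2
      (integrable_of_integrable_inv_of_integrable_mul_sq hw hw_meas hu'_meas hw_inv hint)
  rw [← intervalIntegral.integral_eq_sub_of_hasDerivAt
    (fun t ht ↦ hderiv t (uIcc_of_le hab ▸ ht)) hu'_int, intervalIntegral.integral_of_le hab,
    intervalIntegral.integral_of_le hab, intervalIntegral.integral_of_le hab]
  exact sq_integral_le_integral_inv_mul_integral_mul_sq hw hw_meas hu'_meas hw_inv hint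

lemma intervalIntegral_rpow_neg_le {c ε x : ℝ} (hc : c < 1) (hε : 0 ≤ ε) :
    ∫ t in ε..x, t ^ (-c) ≤ x ^ (1 - c) / (1 - c) := by
  rw [integral_rpow (Or.inl (by linarith)), neg_add_eq_sub]
  exact div_le_div_of_nonneg_right (sub_le_self _ (Real.rpow_nonneg hε _)) (by linarith)

theorem sq_le_rpow_mul_setIntegral_rpow_mul_deriv_sq {c x : ℝ} (hc : c < 1) (hx : 0 < x)
    {u u' : ℝ → ℝ} (hderiv : ∀ t ∈ Ioc 0 x, HasDerivAt u (u' t) t)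
    (hint : IntegrableOn (fun t ↦ t ^ c * u' t ^ 2) (Ioc 0 x))
    (hu0 : Tendsto u (𝓝[>] 0) (𝓝 0)) :
    u x ^ 2 ≤ x ^ (1 - c) / (1 - c) * ∫ t in Ioc 0 x, t ^ c * u' t ^ 2 := by
  have hbound : ∀ ε ∈ Ioo 0 x,
      (u x - u ε) ^ 2 ≤ x ^ (1 - c) / (1 - c) * ∫ t in Ioc 0 x, t ^ c * u' t ^ 2 := by
    intro ε ⟨hε, hεx⟩
    have hsub : Icc ε x ⊆ Ioc 0 x := fun t ht ↦ ⟨hε.trans_le ht.1, ht.2⟩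
    have hpos : ∀ t ∈ Icc ε x, 0 < t ^ c := fun t ht ↦ Real.rpow_pos_of_pos (hsub ht).1 c
    have hcs := sq_sub_le_intervalIntegral_inv_mul_intervalIntegral_mul_sq hεx.le
      (w := fun t ↦ t ^ c) (continuousOn_id.rpow_const fun t ht ↦ Or.inl (hsub ht).1.ne') hpos
      (fun t ht ↦ hderiv t (hsub ht)) (hint.mono_set (Ioc_subset_Icc_self.trans hsub))
    have h_inv : ∫ t in ε..x, (t ^ c)⁻¹ ≤ x ^ (1 - c) / (1 - c) := by
      rw [intervalIntegral.integral_congr fun t ht ↦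
        (Real.rpow_neg (hsub (uIcc_of_le hεx.le ▸ ht)).1.le c).symm]
      exact intervalIntegral_rpow_neg_le hc hε.le
    have h_energy : ∫ t in ε..x, t ^ c * u' t ^ 2 ≤ ∫ t in Ioc 0 x, t ^ c * u' t ^ 2 := by
      rw [intervalIntegral.integral_of_le hεx.le]
      refine setIntegral_mono_set hint ?_ (Ioc_subset_Ioc_left hε.le).eventuallyLE
      filter_upwards [ae_restrict_mem measurableSet_Ioc] with t ht
      exact mul_nonneg (Real.rpow_nonneg ht.1.le c) (sq_nonneg _)
    refine hcs.trans (mul_le_mul h_inv h_energy ?_ ?_)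
    · exact intervalIntegral.integral_nonneg hεx.le fun t ht ↦
        mul_nonneg (hpos t ht).le (sq_nonneg _)
    · exact div_nonneg (Real.rpow_nonneg hx.le _) (by linarith)
  have hlim : Tendsto (fun ε ↦ (u x - u ε) ^ 2) (𝓝[>] 0) (𝓝 ((u x - 0) ^ 2)) :=
    (tendsto_const_nhds.sub hu0).pow 2
  simpa using le_of_tendsto hlim (eventually_of_mem (Ioo_mem_nhdsGT hx) hbound)

lemma setIntegral_Ioo_zero_one_rpow {s : ℝ} (hs : -1 < s) :
    ∫ x in Ioo (0 : ℝ) 1, x ^ s = 1 / (s + 1) := by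
  rw [← integral_Ioc_eq_integral_Ioo, ← intervalIntegral.integral_of_le zero_le_one,
    integral_rpow (Or.inl hs), Real.one_rpow, Real.zero_rpow (by linarith), sub_zero]

lemma sq_mul_rpow_le_setIntegral_div_mul_rpow {α β : ℝ} (hαβ : α + β < 1) {u u' : ℝ → ℝ}
    (hderiv : ∀ x ∈ Ioo (0:ℝ) 1, HasDerivAt u (u' x) x)
    (hint : IntegrableOn (fun x ↦ x ^ (α + β) * u' x ^ 2) (Ioo 0 1))
    (hu0 : Tendsto u (𝓝[>] 0) (𝓝 0)) {x : ℝ} (hx : x ∈ Ioo (0:ℝ) 1) :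
    u x ^ 2 * x ^ β ≤
      (∫ t in Ioo (0:ℝ) 1, t ^ (α + β) * u' t ^ 2) / (1 - α - β) * x ^ (1 - α) := by
  set I := ∫ t in Ioo (0:ℝ) 1, t ^ (α + β) * u' t ^ 2
  have hsub : Ioc 0 x ⊆ Ioo 0 1 := Ioc_subset_Ioo_right hx.2
  have hu_sq := sq_le_rpow_mul_setIntegral_rpow_mul_deriv_sq hαβ hx.1
    (fun t ht ↦ hderiv t (hsub ht)) (hint.mono_set hsub) hu0
  have hI : ∫ t in Ioc 0 x, t ^ (α + β) * u' t ^ 2 ≤ I :=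
    setIntegral_mono_set hint
      ((ae_restrict_mem measurableSet_Ioo).mono fun t ht ↦
        mul_nonneg (Real.rpow_nonneg ht.1.le _) (sq_nonneg _))
      hsub.eventuallyLE
  have hexp : x ^ (1 - (α + β)) * x ^ β = x ^ (1 - α) := by
    rw [← Real.rpow_add hx.1]
    ring_nf
  calc u x ^ 2 * x ^ β ≤ x ^ (1 - (α + β)) / (1 - (α + β)) * I * x ^ β := by
        refine mul_le_mul_of_nonneg_right (hu_sq.trans ?_) (Real.rpow_nonneg hx.1.le _)
        exact mul_le_mul_of_nonneg_left hI
          (div_nonneg (Real.rpow_nonneg hx.1.le _) (by linarith))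
    _ = I / (1 - α - β) * x ^ (1 - α) := by
        rw [← hexp]
        ring

theorem stmt5_general (α β : ℝ) (hα2 : α < 2) (hαβ : α + β < 1) (u u' : ℝ → ℝ)
    (hderiv : ∀ x ∈ Ioo (0:ℝ) 1, HasDerivAt u (u' x) x)
    (hint : IntegrableOn (fun x => x ^ (α + β) * u' x ^ 2) (Ioo 0 1))
    (hu0 : Tendsto u (𝓝[>] (0:ℝ)) (𝓝 0)) :
    ∫ x in Ioo (0:ℝ) 1, u x ^ 2 * x ^ β ≤
      1 / ((2 - α) * (1 - α - β)) * ∫ x in Ioo (0:ℝ) 1, x ^ (α + β) * u' x ^ 2 := by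
  set I := ∫ x in Ioo (0:ℝ) 1, x ^ (α + β) * u' x ^ 2
  calc ∫ x in Ioo (0:ℝ) 1, u x ^ 2 * x ^ β
      ≤ ∫ x in Ioo (0:ℝ) 1, I / (1 - α - β) * x ^ (1 - α) := by
        refine integral_mono_of_nonneg ?_ ?_ ((ae_restrict_mem measurableSet_Ioo).mono fun x ↦
          sq_mul_rpow_le_setIntegral_div_mul_rpow hαβ hderiv hint hu0)
        · exact (ae_restrict_mem measurableSet_Ioo).mono fun x hx ↦
            mul_nonneg (sq_nonneg _) (Real.rpow_nonneg hx.1.le _)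
        · exact ((intervalIntegral.integrableOn_Ioo_rpow_iff zero_lt_one).2
            (by linarith)).const_mul _
    _ = 1 / ((2 - α) * (1 - α - β)) * I := by
        rw [integral_const_mul, setIntegral_Ioo_zero_one_rpow (by linarith)]
        field_simp
        ring

theorem stmt5 (α β : ℝ) (hα : 0 ≤ α) (hα2 : α < 2) (hαβ : α + β < 1) (u u' : ℝ → ℝ)
    (hderiv : ∀ x ∈ Ioo (0:ℝ) 1, HasDerivAt u (u' x) x)
    (hu : IntegrableOn (fun x => u x ^ 2 * x ^ β) (Ioo 0 1))
    (hint : IntegrableOn (fun x => x ^ (α + β) * u' x ^ 2) (Ioo 0 1))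
    (hu0 : Tendsto u (𝓝[>] (0:ℝ)) (𝓝 0))
    (hu1 : Tendsto u (𝓝[<] (1:ℝ)) (𝓝 0)) :
    ∫ x in Ioo (0:ℝ) 1, u x ^ 2 * x ^ β ≤
      1 / ((2 - α) * (1 - α - β)) * ∫ x in Ioo (0:ℝ) 1, x ^ (α + β) * u' x ^ 2 :=
  stmt5_general α β hα2 hαβ u u' hderiv hint hu0
end

section
/- Eigenfunction identity: Let $0\leq\alpha<2$, $\alpha+\beta<1$, $\mu<(1-\alpha-\beta)^2/4$, $\kappa_\alpha=(2-\alpha)/2$, $\nu=\sqrt{(1-\alpha-\beta)^2/4-\mu}/\kappa_\alpha$, and let $j_{\nu,k}$ be the $k$-th positive zero of the Bessel function $J_\nu$. Then the function $\Phi_k(x)=x^{(1-\alpha-\beta)/2}J_\nu(j_{\nu,k}x^{\kappa_\alpha})$ satisfies, for all $x\in(0,1)$, $$-(x^{\alpha}\Phi_k')'(x)-\beta x^{\alpha-1}\Phi_k'(x)-\frac{\mu}{x^{2-\alpha}}\Phi_k(x)=\kappa_\alpha^2 j_{\nu,k}^2\,\Phi_k(x).$$ -/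
open MeasureTheory Set

theorem stmt9 (α β μ : ℝ) (hα : 0 ≤ α) (hα2 : α < 2) (hαβ : α + β < 1)
    (hμ : μ < (1 - α - β)^2 / 4) (κ ν : ℝ) (hκ : κ = (2 - α)/2)
    (hν : ν = Real.sqrt ((1 - α - β)^2 / 4 - μ) / κ)
    (J J' J'' : ℝ → ℝ)
    (hJ1 : ∀ y > (0:ℝ), HasDerivAt J (J' y) y)
    (hJ2 : ∀ y > (0:ℝ), HasDerivAt J' (J'' y) y)
    (hODE : ∀ y > (0:ℝ), y^2 * J'' y + y * J' y + (y^2 - ν^2) * J y = 0)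
    (j : ℝ) (hj : 0 < j) (hjz : J j = 0) :
    ∀ x ∈ Ioo (0:ℝ) 1,
      -(deriv (fun t => t ^ α * deriv (fun s => s ^ ((1 - α - β)/2) * J (j * s ^ κ)) t) x)
        - β * x ^ (α - 1) * deriv (fun s => s ^ ((1 - α - β)/2) * J (j * s ^ κ)) x
        - μ / x ^ (2 - α) * (x ^ ((1 - α - β)/2) * J (j * x ^ κ))
      = κ^2 * j^2 * (x ^ ((1 - α - β)/2) * J (j * x ^ κ)) := by
  intro x hx
  obtain ⟨hx0, hx1⟩ := hx
  set p := (1 - α - β)/2 with hp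
  have hκ0 : (0:ℝ) < κ := by rw [hκ]; linarith
  have hypos : ∀ s : ℝ, 0 < s → 0 < j * s ^ κ := fun s hs =>
    mul_pos hj (Real.rpow_pos_of_pos hs κ)
  have hP2 : ∀ s : ℝ, s ≠ 0 → HasDerivAt (fun s : ℝ => j * s ^ κ)
      (j * (κ * s ^ (κ-1))) s := fun s hs =>
    (Real.hasDerivAt_rpow_const (Or.inl hs)).const_mul j
  -- derivative of Φ
  have hΦ : ∀ s : ℝ, 0 < s → HasDerivAt (fun s => s ^ p * J (j * s ^ κ))
      (p * s ^ (p-1) * J (j * s ^ κ)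
        + s ^ p * (J' (j * s ^ κ) * (j * (κ * s ^ (κ-1))))) s := by
    intro s hs
    have h1 : HasDerivAt (fun s : ℝ => s ^ p) (p * s ^ (p-1)) s :=
      Real.hasDerivAt_rpow_const (Or.inl hs.ne')
    have h3 := (hJ1 _ (hypos s hs)).comp s (hP2 s hs.ne')
    exact h1.mul h3
  -- derivative of g := Φ'
  have hg : HasDerivAt (fun s => p * s ^ (p-1) * J (j * s ^ κ)
        + s ^ p * (J' (j * s ^ κ) * (j * (κ * s ^ (κ-1)))))
      ((p * ((p-1) * x ^ (p-1-1))) * J (j*x^κ)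
        + (p * x ^ (p-1)) * (J' (j*x^κ) * (j * (κ * x ^ (κ-1))))
        + ((p * x ^ (p-1)) * (J' (j*x^κ) * (j * (κ * x ^ (κ-1))))
          + x ^ p * ((J'' (j*x^κ) * (j * (κ * x ^ (κ-1)))) * (j * (κ * x ^ (κ-1)))
            + J' (j*x^κ) * (j * (κ * ((κ-1) * x ^ (κ-1-1))))))) x := by
    have hy := hypos x hx0
    have hpow1 : HasDerivAt (fun s : ℝ => s ^ (p-1)) ((p-1) * x ^ (p-1-1)) x :=
      Real.hasDerivAt_rpow_const (Or.inl hx0.ne')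
    have hpowp : HasDerivAt (fun s : ℝ => s ^ p) (p * x ^ (p-1)) x :=
      Real.hasDerivAt_rpow_const (Or.inl hx0.ne')
    have h3 := (hJ1 _ hy).comp x (hP2 x hx0.ne')
    have h4 := (hJ2 _ hy).comp x (hP2 x hx0.ne')
    have h5 : HasDerivAt (fun s : ℝ => j * (κ * s ^ (κ-1)))
        (j * (κ * ((κ-1) * x ^ (κ-1-1)))) x :=
      ((Real.hasDerivAt_rpow_const (Or.inl hx0.ne')).const_mul κ).const_mul j
    exact ((hpow1.const_mul p).mul h3).add (hpowp.mul (h4.mul h5))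
  have hderivΦ : ∀ s : ℝ, 0 < s → deriv (fun s => s ^ p * J (j * s ^ κ)) s
      = p * s ^ (p-1) * J (j * s ^ κ)
        + s ^ p * (J' (j * s ^ κ) * (j * (κ * s ^ (κ-1)))) := fun s hs => (hΦ s hs).deriv
  have hF : HasDerivAt (fun t : ℝ => t ^ α * (p * t ^ (p-1) * J (j * t ^ κ)
        + t ^ p * (J' (j * t ^ κ) * (j * (κ * t ^ (κ-1))))))
      ((α * x ^ (α-1)) * (p * x ^ (p-1) * J (j*x^κ)
          + x ^ p * (J' (j*x^κ) * (j * (κ * x ^ (κ-1)))))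
        + x ^ α * ((p * ((p-1) * x ^ (p-1-1))) * J (j*x^κ)
        + (p * x ^ (p-1)) * (J' (j*x^κ) * (j * (κ * x ^ (κ-1))))
        + ((p * x ^ (p-1)) * (J' (j*x^κ) * (j * (κ * x ^ (κ-1))))
          + x ^ p * ((J'' (j*x^κ) * (j * (κ * x ^ (κ-1)))) * (j * (κ * x ^ (κ-1)))
            + J' (j*x^κ) * (j * (κ * ((κ-1) * x ^ (κ-1-1)))))))) x :=
    (Real.hasDerivAt_rpow_const (Or.inl hx0.ne')).mul hg
  have hEq : deriv (fun t => t ^ α * deriv (fun s => s ^ p * J (j * s ^ κ)) t) x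
      = (α * x ^ (α-1)) * (p * x ^ (p-1) * J (j*x^κ)
          + x ^ p * (J' (j*x^κ) * (j * (κ * x ^ (κ-1)))))
        + x ^ α * ((p * ((p-1) * x ^ (p-1-1))) * J (j*x^κ)
        + (p * x ^ (p-1)) * (J' (j*x^κ) * (j * (κ * x ^ (κ-1))))
        + ((p * x ^ (p-1)) * (J' (j*x^κ) * (j * (κ * x ^ (κ-1))))
          + x ^ p * ((J'' (j*x^κ) * (j * (κ * x ^ (κ-1)))) * (j * (κ * x ^ (κ-1)))
            + J' (j*x^κ) * (j * (κ * ((κ-1) * x ^ (κ-1-1))))))) := by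
    have heq : (fun t => t ^ α * deriv (fun s => s ^ p * J (j * s ^ κ)) t)
        =ᶠ[nhds x] (fun t => t ^ α * (p * t ^ (p-1) * J (j * t ^ κ)
          + t ^ p * (J' (j * t ^ κ) * (j * (κ * t ^ (κ-1)))))) := by
      filter_upwards [Ioi_mem_nhds hx0] with t ht
      rw [hderivΦ t ht]
    rw [heq.deriv_eq]
    exact hF.deriv
  rw [hEq, hderivΦ x hx0]
  -- now pure algebra
  have hODE' := hODE (j * x ^ κ) (hypos x hx0)
  have hKpos : (0:ℝ) < x ^ κ := Real.rpow_pos_of_pos hx0 κ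
  have hν2 : ν^2 = (p^2 - μ)/κ^2 := by
    rw [hν, div_pow, Real.sq_sqrt (by nlinarith : (0:ℝ) ≤ (1-α-β)^2/4 - μ), hp]
    ring_nf
  have hJ2v : J'' (j * x ^ κ) = (-((j*x^κ) * J' (j*x^κ)
      + ((j*x^κ)^2 - ν^2) * J (j*x^κ))) / (j*x^κ)^2 := by
    have hy := hypos x hx0
    field_simp
    linarith [hODE']
  have h2r : x ^ (2:ℝ) = x * x := by
    rw [show (2:ℝ) = ((2:ℕ):ℝ) by norm_num, Real.rpow_natCast]; ring
  have e1 : x ^ (p-1) = x ^ p / x := by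
    rw [Real.rpow_sub hx0, Real.rpow_one]
  have e2 : x ^ (p-1-1) = x ^ p / x / x := by
    rw [Real.rpow_sub hx0, Real.rpow_sub hx0, Real.rpow_one]
  have e3 : x ^ (κ-1) = x ^ κ / x := by
    rw [Real.rpow_sub hx0, Real.rpow_one]
  have e4 : x ^ (κ-1-1) = x ^ κ / x / x := by
    rw [Real.rpow_sub hx0, Real.rpow_sub hx0, Real.rpow_one]
  have e5 : x ^ (α-1) = x ^ α / x := by
    rw [Real.rpow_sub hx0, Real.rpow_one]
  have e6 : x ^ ((2:ℝ)-α) = x * x / x ^ α := by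
    rw [Real.rpow_sub hx0, h2r]
  have e7 : x ^ α = x * x / (x ^ κ * x ^ κ) := by
    have hAK : x ^ α * (x ^ κ * x ^ κ) = x * x := by
      rw [← Real.rpow_add hx0 κ κ, ← Real.rpow_add hx0,
        show α + (κ + κ) = (2:ℝ) by rw [hκ]; ring, h2r]
    rw [eq_div_iff (by positivity)]
    exact hAK
  rw [hJ2v, hν2, e1, e2, e3, e4, e5, e6, e7,
    show β = 1 - α - 2*p by rw [hp]; ring,
    show α = 2 - 2*κ by rw [hκ]; ring]
  have hxne : x ≠ 0 := hx0.ne'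
  have hKne : x ^ κ ≠ 0 := hKpos.ne'
  field_simp
  ring
end

section
/- With notation as above, for all real $x$: $H_{a,\theta}(ix)\geq \frac{1}{11\sqrt{\theta+1}}\exp\left(\frac{a|x|}{2\sqrt{\theta+1}}\right)$. -/
/-!
`H(ix) = L(ax) / L(0)` for the two-sided Laplace transform `L(y) = ∫ σ_θ(t) e^{ty}` of the bump,
which is even in `y`, so we may take `y ≥ 0`. With `s = √(θ+1)`, on `(1/(2s), 1/s)` we have
`σ_θ ≥ e^{-(θ+1)}` and `e^{ty} ≥ e^{y/(2s)}`, so `L(y) ≥ e^{-(θ+1)} e^{y/(2s)} / (2s)`;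
on the other hand `σ_θ ≤ e^{-θ}` gives `L(0) ≤ 2e^{-θ}`. The quotient is therefore at least
`e^{y/(2s)} / (4es)`, and `4e < 11`.
-/

open MeasureTheory Set

/-- The bump function `σ_θ(t) = exp(-θ/(1-t²))` on `(-1,1)`, extended by `0`. -/
noncomputable def sigmaTheta (θ t : ℝ) : ℝ :=
  if t ∈ Set.Ioo (-1:ℝ) 1 then Real.exp (-θ / (1 - t^2)) else 0

/-- Normalizing constant `C_θ = (∫_{-1}^1 σ_θ)⁻¹`. -/
noncomputable def Ctheta (θ : ℝ) : ℝ := (∫ t in Ioo (-1:ℝ) 1, sigmaTheta θ t)⁻¹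

/-- The multiplier `H_{a,θ}(z) = C_θ ∫_{-1}^1 σ_θ(t) e^{-iatz} dt`. -/
noncomputable def Hmult (a θ : ℝ) (z : ℂ) : ℂ :=
  (Ctheta θ : ℂ) * ∫ t in Ioo (-1:ℝ) 1, (sigmaTheta θ t : ℂ) *
    Complex.exp (-Complex.I * a * t * z)

open Real

section

variable {θ : ℝ}

lemma sigmaTheta_nonneg (θ t : ℝ) : 0 ≤ sigmaTheta θ t := by
  unfold sigmaTheta; split <;> positivity

lemma sigmaTheta_neg (θ t : ℝ) : sigmaTheta θ (-t) = sigmaTheta θ t := by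
  have hmem : -t ∈ Ioo (-1:ℝ) 1 ↔ t ∈ Ioo (-1:ℝ) 1 := by
    simp only [mem_Ioo, neg_lt, neg_neg, and_comm]
  simp only [sigmaTheta, hmem, neg_sq]

lemma measurable_sigmaTheta (θ : ℝ) : Measurable (sigmaTheta θ) :=
  Measurable.ite measurableSet_Ioo (by fun_prop) measurable_const

lemma sigmaTheta_le_exp_neg (hθ : 0 ≤ θ) (t : ℝ) : sigmaTheta θ t ≤ exp (-θ) := by
  unfold sigmaTheta
  split_ifs with ht
  · have h0 : 0 < 1 - t ^ 2 := by nlinarith [ht.1, ht.2]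
    gcongr
    rw [neg_div, neg_le_neg_iff, le_div_iff₀ h0]
    nlinarith [sq_nonneg t]
  · positivity

lemma exp_neg_add_one_le_sigmaTheta (hθ : 0 ≤ θ) {t : ℝ} (ht : t ^ 2 * (θ + 1) < 1) :
    exp (-(θ + 1)) ≤ sigmaTheta θ t := by
  have ht1 : t ^ 2 < 1 := by nlinarith [sq_nonneg t]
  have hmem : t ∈ Ioo (-1:ℝ) 1 := by
    constructor <;> nlinarith [sq_nonneg (t + 1), sq_nonneg (t - 1)]
  rw [sigmaTheta, if_pos hmem]
  gcongr
  rw [neg_div, neg_le_neg_iff, div_le_iff₀ (by linarith)]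
  nlinarith

lemma integrableOn_sigmaTheta (hθ : 0 ≤ θ) : IntegrableOn (sigmaTheta θ) (Icc (-1:ℝ) 1) := by
  refine Measure.integrableOn_of_bounded (M := exp (-θ)) (by simp)
    (measurable_sigmaTheta θ).aestronglyMeasurable (ae_of_all _ fun t => ?_)
  rw [norm_of_nonneg (sigmaTheta_nonneg θ t)]
  exact sigmaTheta_le_exp_neg hθ t

lemma integrableOn_sigmaTheta_mul_exp (hθ : 0 ≤ θ) (y : ℝ) :
    IntegrableOn (fun t => sigmaTheta θ t * exp (t * y)) (Ioo (-1:ℝ) 1) :=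
  ((integrableOn_sigmaTheta hθ).mul_continuousOn (by fun_prop) isCompact_Icc).mono_set
    Ioo_subset_Icc_self

noncomputable def sigmaLaplace (θ y : ℝ) : ℝ :=
  ∫ t in Ioo (-1:ℝ) 1, sigmaTheta θ t * exp (t * y)

lemma sigmaLaplace_neg (θ y : ℝ) : sigmaLaplace θ (-y) = sigmaLaplace θ y := by
  have hIoo (g : ℝ → ℝ) : ∫ t in Ioo (-1:ℝ) 1, g t = ∫ t in (-1:ℝ)..1, g t := by
    rw [intervalIntegral.integral_of_le (by norm_num), integral_Ioc_eq_integral_Ioo]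
  have hreflect : (fun t => sigmaTheta θ t * exp (t * -y)) =
      fun t => sigmaTheta θ (-t) * exp (-t * y) := by
    funext t
    rw [sigmaTheta_neg, neg_mul, mul_neg]
  rw [sigmaLaplace, sigmaLaplace, hIoo, hIoo, hreflect,
    intervalIntegral.integral_comp_neg (fun t => sigmaTheta θ t * exp (t * y)), neg_neg]

lemma sigmaLaplace_abs (θ y : ℝ) : sigmaLaplace θ |y| = sigmaLaplace θ y := by
  rcases abs_choice y with h | h <;> rw [h]
  exact sigmaLaplace_neg θ y

lemma sigmaLaplace_zero_le (hθ : 0 ≤ θ) : sigmaLaplace θ 0 ≤ 2 * exp (-θ) := by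
  calc sigmaLaplace θ 0 ≤ ∫ _ in Ioo (-1:ℝ) 1, exp (-θ) := by
        refine setIntegral_mono_on (integrableOn_sigmaTheta_mul_exp hθ 0) (by simp)
          measurableSet_Ioo fun t _ => ?_
        simpa using sigmaTheta_le_exp_neg hθ t
    _ = 2 * exp (-θ) := by
        rw [setIntegral_const, Real.volume_real_Ioo_of_le (by norm_num), smul_eq_mul]
        norm_num

lemma exp_mul_div_le_sigmaLaplace (hθ : 0 ≤ θ) {y : ℝ} (hy : 0 ≤ y) :
    exp (-(θ + 1)) * exp (y / (2 * √(θ + 1))) / (2 * √(θ + 1)) ≤ sigmaLaplace θ y := by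
  set s := √(θ + 1)
  have hs_sq : s ^ 2 = θ + 1 := Real.sq_sqrt (by linarith)
  have hs1 : 1 ≤ s := Real.one_le_sqrt.2 (by linarith)
  set c := 1 / (2 * s)
  have hc : 0 < c := by positivity
  have hsc : 2 * s * c = 1 := by simp only [c]; field_simp
  have hsub : Ioo c (2 * c) ⊆ Ioo (-1:ℝ) 1 := fun t ht =>
    ⟨by linarith [ht.1], by nlinarith [ht.2, mul_nonneg (sub_nonneg.2 hs1) hc.le]⟩
  have hbound : ∀ t ∈ Ioo c (2 * c), exp (-(θ + 1)) * exp (y / (2 * s)) ≤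
      sigmaTheta θ t * exp (t * y) := by
    intro t ht
    have hst : s * t < 1 := by nlinarith [ht.2]
    have hst0 : 0 < s * t := by nlinarith [ht.1]
    have hσ : exp (-(θ + 1)) ≤ sigmaTheta θ t := by
      refine exp_neg_add_one_le_sigmaTheta hθ ?_
      rw [← hs_sq, ← mul_pow, mul_comm]
      nlinarith
    have hexp : exp (y / (2 * s)) ≤ exp (t * y) := by
      rw [exp_le_exp, div_eq_mul_one_div, mul_comm]
      exact mul_le_mul_of_nonneg_right ht.1.le hy
    exact mul_le_mul hσ hexp (exp_pos _).le (sigmaTheta_nonneg θ t)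
  calc exp (-(θ + 1)) * exp (y / (2 * s)) / (2 * s)
      = exp (-(θ + 1)) * exp (y / (2 * s)) * volume.real (Ioo c (2 * c)) := by
        rw [Real.volume_real_Ioo_of_le (by linarith)]
        ring
    _ ≤ ∫ t in Ioo c (2 * c), sigmaTheta θ t * exp (t * y) :=
        setIntegral_ge_of_const_le_real measurableSet_Ioo (by simp) hbound
          ((integrableOn_sigmaTheta_mul_exp hθ y).mono_set hsub)
    _ ≤ sigmaLaplace θ y :=
        setIntegral_mono_set (integrableOn_sigmaTheta_mul_exp hθ y)
          (ae_of_all _ fun t => mul_nonneg (sigmaTheta_nonneg θ t) (exp_pos _).le)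
          hsub.eventuallyLE

lemma exp_div_le_sigmaLaplace_div (hθ : 0 ≤ θ) {y : ℝ} (hy : 0 ≤ y) :
    exp (y / (2 * √(θ + 1))) / (11 * √(θ + 1)) ≤ sigmaLaplace θ y / sigmaLaplace θ 0 := by
  set s := √(θ + 1)
  have hs : 0 < s := Real.sqrt_pos.2 (by linarith)
  have hnum := exp_mul_div_le_sigmaLaplace hθ hy
  have hden_pos : 0 < sigmaLaplace θ 0 :=
    lt_of_lt_of_le (by positivity) (exp_mul_div_le_sigmaLaplace hθ le_rfl)
  have hden := sigmaLaplace_zero_le hθ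
  have he : exp (-(θ + 1)) = exp (-1) * exp (-θ) := by rw [← exp_add]; ring_nf
  have h4e : 4 / 11 ≤ exp (-1) := by
    rw [exp_neg, le_inv_comm₀ (by norm_num) (exp_pos 1)]
    linarith [exp_one_lt_d9]
  rw [le_div_iff₀ hden_pos]
  calc exp (y / (2 * s)) / (11 * s) * sigmaLaplace θ 0
      ≤ exp (y / (2 * s)) / (11 * s) * (2 * exp (-θ)) := by gcongr
    _ = 4 / 11 * exp (-θ) * exp (y / (2 * s)) / (2 * s) := by field_simp; ring
    _ ≤ exp (-1) * exp (-θ) * exp (y / (2 * s)) / (2 * s) := by gcongr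
    _ = exp (-(θ + 1)) * exp (y / (2 * s)) / (2 * s) := by rw [he]
    _ ≤ sigmaLaplace θ y := hnum

end

lemma Hmult_I_mul_re (a θ x : ℝ) :
    (Hmult a θ (Complex.I * x)).re = sigmaLaplace θ (a * x) / sigmaLaplace θ 0 := by
  have hintegrand (t : ℝ) :
      (sigmaTheta θ t : ℂ) * Complex.exp (-Complex.I * a * t * (Complex.I * x)) =
        ((sigmaTheta θ t * exp (t * (a * x)) : ℝ) : ℂ) := by
    have harg : -Complex.I * a * t * (Complex.I * x) = ((t * (a * x) : ℝ) : ℂ) := by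
      push_cast
      linear_combination (-(↑a * ↑t * ↑x) : ℂ) * Complex.I_sq
    rw [harg, ← Complex.ofReal_exp, Complex.ofReal_mul]
  have hC : Ctheta θ = (sigmaLaplace θ 0)⁻¹ := by
    simp only [Ctheta, sigmaLaplace, mul_zero, exp_zero, mul_one]
  simp_rw [Hmult, hintegrand]
  rw [integral_complex_ofReal, ← Complex.ofReal_mul, Complex.ofReal_re, hC, inv_mul_eq_div]
  rfl

theorem stmt14_general (a θ : ℝ) (hθ : 0 < θ) :
    ∀ x : ℝ,
      Real.exp (a * |x| / (2 * Real.sqrt (θ + 1))) / (11 * Real.sqrt (θ + 1)) ≤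
        (Hmult a θ (Complex.I * x)).re := by
  intro x
  rw [Hmult_I_mul_re, ← sigmaLaplace_abs θ (a * x)]
  calc exp (a * |x| / (2 * √(θ + 1))) / (11 * √(θ + 1))
      ≤ exp (|a * x| / (2 * √(θ + 1))) / (11 * √(θ + 1)) := by
        gcongr
        rw [abs_mul]
        exact mul_le_mul_of_nonneg_right (le_abs_self a) (abs_nonneg x)
    _ ≤ _ := exp_div_le_sigmaLaplace_div hθ.le (abs_nonneg _)

theorem stmt14 (a θ : ℝ) (ha : 0 < a) (hθ : 0 < θ) :
    ∀ x : ℝ,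
      Real.exp (a * |x| / (2 * Real.sqrt (θ + 1))) / (11 * Real.sqrt (θ + 1)) ≤
        (Hmult a θ (Complex.I * x)).re :=
  stmt14_general a θ hθ
end
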